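/- Let G be a finite simple graph and x a vertex of G. If both G_x := G∖N[x] and G∖x are well-covered with α(G∖x) = α(G_x) + 1, then G is well-covered with α(G) = α(G∖x). -/

import Mathlib

open SimpleGraph

variable {V : Type*} {W : Type*}

/-- The open neighborhood `N(x)` of a vertex, as a set. -/
def nbhd (G : SimpleGraph V) (x : V) : Set V := {u | G.Adj x u}

/-- The closed neighborhood `N[x]` of a vertex. -/
def closedNbhd (G : SimpleGraph V) (x : V) : Set V := insert x {u | G.Adj x u}

/-- The degree of a vertex. -/
noncomputable def deg (G : SimpleGraph V) (x : V) : ℕ := (nbhd G x).ncard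

/-- `S` is an independent set of vertices of `G`. -/
def IsIndep (G : SimpleGraph V) (S : Set V) : Prop :=
  ∀ u ∈ S, ∀ w ∈ S, ¬ G.Adj u w

/-- `S` is an independent set contained in `A`, i.e. an independent set of the
induced subgraph of `G` on `A`. -/
def IsIndepOn (G : SimpleGraph V) (A S : Set V) : Prop :=
  S ⊆ A ∧ IsIndep G S

/-- `S` is a maximal independent set of the induced subgraph of `G` on `A`. -/
def IsMaxIndepOn (G : SimpleGraph V) (A S : Set V) : Prop :=
  IsIndepOn G A S ∧ ∀ T : Set V, IsIndepOn G A T → S ⊆ T → S = T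

/-- A graph is well-covered if all its maximal independent sets have the same
cardinality. -/
def WellCovered (G : SimpleGraph V) : Prop :=
  ∀ S T : Set V, IsMaxIndepOn G Set.univ S → IsMaxIndepOn G Set.univ T →
    S.ncard = T.ncard

/-- The independence number `α(G)` of a graph. -/
noncomputable def indepNumG (G : SimpleGraph V) : ℕ :=
  sSup {n : ℕ | ∃ S : Set V, IsIndep G S ∧ S.ncard = n}

/-- `VDOn G A` means: the induced subgraph of `G` on `A` is vertex decomposable,
via the recursive graph-theoretic characterization: it has no edges, or there is
a vertex `v ∈ A` such that both `G∖v` and `G∖N[v]` (within `A`) are vertex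
decomposable and no independent set of `G∖N[v]` is a maximal independent set
of `G∖v`. -/
inductive VDOn (G : SimpleGraph V) : Set V → Prop
  | no_edges (A : Set V) (h : ∀ u ∈ A, ∀ w ∈ A, ¬ G.Adj u w) : VDOn G A
  | step (A : Set V) (v : V) (hv : v ∈ A)
      (hdel : VDOn G (A \ {v}))
      (hlk : VDOn G (A \ closedNbhd G v))
      (hshed : ∀ S : Set V, IsIndepOn G (A \ closedNbhd G v) S →
        ¬ IsMaxIndepOn G (A \ {v}) S) : VDOn G A

/-- A graph is vertex decomposable. -/
def VertexDecomposable (G : SimpleGraph V) : Prop := VDOn G Set.univ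

/-- `c` lists the vertices of an `n`-cycle of `G` in cyclic order. -/
def IsCycleMap {n : ℕ} (G : SimpleGraph V) (c : ZMod n → V) : Prop :=
  Function.Injective c ∧ ∀ i : ZMod n, G.Adj (c i) (c (i + 1))

/-- A vertex is simplicial if its closed neighborhood induces a complete graph. -/
def IsSimplicial (G : SimpleGraph V) (x : V) : Prop :=
  ∀ u w : V, G.Adj x u → G.Adj x w → u ≠ w → G.Adj u w

/-- A basic 5-cycle: a 5-cycle containing no two adjacent vertices that both
have degree at least 3 in `G`. -/
def IsBasic5Cycle (G : SimpleGraph V) (c : ZMod 5 → V) : Prop :=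
  IsCycleMap G c ∧ ∀ i : ZMod 5, ¬(3 ≤ deg G (c i) ∧ 3 ≤ deg G (c (i + 1)))

/-- A basic 3-cycle: a 3-cycle containing at least one vertex of degree 2. -/
def IsBasic3Cycle (G : SimpleGraph V) (c : ZMod 3 → V) : Prop :=
  IsCycleMap G c ∧ ∃ i : ZMod 3, deg G (c i) = 2

/-- `x` belongs to a simplex of `G`, i.e. to the closed neighborhood of a
simplicial vertex. -/
def InSimplex (G : SimpleGraph V) (x : V) : Prop :=
  ∃ v : V, IsSimplicial G v ∧ x ∈ closedNbhd G v

/-- `x` lies on a basic 5-cycle of `G`. -/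
def OnBasic5Cycle (G : SimpleGraph V) (x : V) : Prop :=
  ∃ c : ZMod 5 → V, IsBasic5Cycle G c ∧ x ∈ Set.range c

/-- A basic 4-cycle, labelled so that `c 0` and `c 1` are two adjacent vertices
of degree two, and the remaining two vertices `c 2`, `c 3` each belong to a
simplex or to a basic 5-cycle of `G`.  The set `B(Q)` of such a labelled basic
4-cycle is `{c 0, c 1}`. -/
def IsBasic4Cycle (G : SimpleGraph V) (c : ZMod 4 → V) : Prop :=
  IsCycleMap G c ∧ deg G (c 0) = 2 ∧ deg G (c 1) = 2 ∧
    (InSimplex G (c 2) ∨ OnBasic5Cycle G (c 2)) ∧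
    (InSimplex G (c 3) ∨ OnBasic5Cycle G (c 3))

/-- The class `SQC`: the vertex set is partitioned by the closed neighborhoods
of `m` simplicial vertices, the vertex sets of `s` basic 5-cycles and the sets
`B(Q)` of `t` basic 4-cycles. -/
def InSQC (G : SimpleGraph V) : Prop :=
  ∃ (m s t : ℕ) (x : Fin m → V) (c : Fin s → ZMod 5 → V) (q : Fin t → ZMod 4 → V),
    (∀ i, IsSimplicial G (x i)) ∧
    (∀ j, IsBasic5Cycle G (c j)) ∧
    (∀ k, IsBasic4Cycle G (q k)) ∧
    (∀ v : V, ∃! p : Fin m ⊕ Fin s ⊕ Fin t,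
      match p with
      | Sum.inl i => v ∈ closedNbhd G (x i)
      | Sum.inr (Sum.inl j) => v ∈ Set.range (c j)
      | Sum.inr (Sum.inr k) => v = q k 0 ∨ v = q k 1)

/-- The class `SC`: the vertex set is partitioned by the closed neighborhoods
of `m` simplicial vertices and the vertex sets of `s` basic 5-cycles. -/
def InSC (G : SimpleGraph V) : Prop :=
  ∃ (m s : ℕ) (x : Fin m → V) (c : Fin s → ZMod 5 → V),
    (∀ i, IsSimplicial G (x i)) ∧
    (∀ j, IsBasic5Cycle G (c j)) ∧
    (∀ v : V, ∃! p : Fin m ⊕ Fin s,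
      match p with
      | Sum.inl i => v ∈ closedNbhd G (x i)
      | Sum.inr j => v ∈ Set.range (c j))

/-- `{u, w}` is a pendant edge of `G`: an edge incident with a vertex of
degree 1. -/
def PendantEdge (G : SimpleGraph V) (u w : V) : Prop :=
  G.Adj u w ∧ (deg G u = 1 ∨ deg G w = 1)

/-- `P(G)`: vertices incident with pendant edges. -/
def pendantVerts (G : SimpleGraph V) : Set V := {v | ∃ u, PendantEdge G v u}

/-- `C(G)`: vertices lying on basic 5-cycles. -/
def basic5Verts (G : SimpleGraph V) : Set V := {v | OnBasic5Cycle G v}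

/-- The class `PC`: `V(G) = P(G) ∪ C(G)` with `P(G) ∩ C(G) = ∅`, the basic
5-cycles partition `C(G)` (i.e. are pairwise vertex-disjoint), and the pendant
edges form a perfect matching of `P(G)`. -/
def InPC (G : SimpleGraph V) : Prop :=
  pendantVerts G ∪ basic5Verts G = Set.univ ∧
  pendantVerts G ∩ basic5Verts G = ∅ ∧
  (∀ c c' : ZMod 5 → V, IsBasic5Cycle G c → IsBasic5Cycle G c' →
    Set.range c = Set.range c' ∨ Disjoint (Set.range c) (Set.range c')) ∧
  (∀ v ∈ pendantVerts G, ∃! u : V, PendantEdge G v u)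

/-- The induced subgraph of `G` on `B` has no cut vertex: removing any vertex
of `B` leaves it (pre)connected. -/
def NoCutVertexOn (G : SimpleGraph V) (B : Set V) : Prop :=
  ∀ v ∈ B, (G.induce (B \ {v})).Preconnected

/-- `B` is (the vertex set of) a block of `G`: a maximal connected induced
subgraph without a cut vertex. -/
def IsBlockOf (G : SimpleGraph V) (B : Set V) : Prop :=
  B.Nonempty ∧ (G.induce B).Connected ∧ NoCutVertexOn G B ∧
  ∀ B' : Set V, B ⊆ B' → (G.induce B').Connected → NoCutVertexOn G B' → B' = B

/-- The induced subgraph of `G` on `B` is complete. -/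
def IsCompleteOn (G : SimpleGraph V) (B : Set V) : Prop :=
  ∀ u ∈ B, ∀ w ∈ B, u ≠ w → G.Adj u w

/-- The induced subgraph of `G` on `B` is a cycle. -/
def IsCycleOn (G : SimpleGraph V) (B : Set V) : Prop :=
  ∃ n : ℕ, 3 ≤ n ∧ ∃ c : ZMod n → V, Function.Injective c ∧ Set.range c = B ∧
    ∀ i j : ZMod n, G.Adj (c i) (c j) ↔ (j = i + 1 ∨ i = j + 1)

/-- A block-cactus graph: every block is complete or a cycle. -/
def IsBlockCactus (G : SimpleGraph V) : Prop :=
  ∀ B : Set V, IsBlockOf G B → IsCompleteOn G B ∨ IsCycleOn G B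

/-- A cactus graph: connected, and any two (distinct) cycles have at most one
vertex in common. -/
def IsCactus (G : SimpleGraph V) : Prop :=
  G.Connected ∧
  ∀ (n m : ℕ), 3 ≤ n → 3 ≤ m → ∀ (c : ZMod n → V) (c' : ZMod m → V),
    IsCycleMap G c → IsCycleMap G c' →
    Set.range c = Set.range c' ∨ (Set.range c ∩ Set.range c').Subsingleton

/-- `S` is a pendant edge of `G` incident with `v`. -/
def IncidentPendant (G : SimpleGraph V) (v : V) (S : Set V) : Prop :=
  ∃ u, PendantEdge G v u ∧ S = {v, u}

/-- `S` is (the vertex set of) a basic 3-cycle of `G` through `v`. -/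
def IncidentBasic3 (G : SimpleGraph V) (v : V) (S : Set V) : Prop :=
  ∃ c : ZMod 3 → V, IsBasic3Cycle G c ∧ Set.range c = S ∧ v ∈ S

/-- `S` is (the vertex set of) a basic 4-cycle of `G` through `v`. -/
def IncidentBasic4 (G : SimpleGraph V) (v : V) (S : Set V) : Prop :=
  ∃ c : ZMod 4 → V, IsBasic4Cycle G c ∧ Set.range c = S ∧ v ∈ S

/-- `S` is (the vertex set of) a basic 5-cycle of `G` through `v`. -/
def IncidentBasic5 (G : SimpleGraph V) (v : V) (S : Set V) : Prop :=
  ∃ c : ZMod 5 → V, IsBasic5Cycle G c ∧ Set.range c = S ∧ v ∈ S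

/-- `H` is a minor of `G`, witnessed by pairwise disjoint connected branch
sets. -/
def IsMinorOf (H : SimpleGraph W) (G : SimpleGraph V) : Prop :=
  ∃ f : W → Set V,
    (∀ w, (G.induce (f w)).Connected) ∧
    (∀ w w', w ≠ w' → Disjoint (f w) (f w')) ∧
    (∀ w w', H.Adj w w' → ∃ a ∈ f w, ∃ b ∈ f w', G.Adj a b)

/-- Planarity, via Wagner's characterization: a graph is planar iff it has
neither `K₅` nor `K₃,₃` as a minor. -/
def IsPlanar (G : SimpleGraph V) : Prop :=
  ¬ IsMinorOf (⊤ : SimpleGraph (Fin 5)) G ∧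
  ¬ IsMinorOf (completeBipartiteGraph (Fin 3) (Fin 3)) G

/-- The class `W₂`: a well-covered graph such that deleting any vertex leaves a
well-covered graph with the same independence number. -/
def InW2 (G : SimpleGraph V) : Prop :=
  WellCovered G ∧ ∀ x : V,
    WellCovered (G.induce ({x}ᶜ : Set V)) ∧
    indepNumG (G.induce ({x}ᶜ : Set V)) = indepNumG G

/-- The edge relation of the graph `G_n`, on vertex labels `1, …, 3n-1`
(the vertex `x_i` has label `i`). -/
def gnRel (n : ℕ) (a b : ℕ) : Prop :=
  (a = 1 ∧ b = 2) ∨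
  (∃ k : ℕ, 1 ≤ k ∧ k ≤ n - 1 ∧
    ((a = 3 * k - 1 ∧ b = 3 * k) ∨ (a = 3 * k ∧ b = 3 * k + 1) ∨
     (a = 3 * k + 1 ∧ b = 3 * k + 2) ∨ (a = 3 * k + 2 ∧ b = 3 * k - 2))) ∨
  (∃ l : ℕ, 2 ≤ l ∧ l ≤ n - 1 ∧ a = 3 * l - 3 ∧ b = 3 * l)

/-- The graph `G_n`, with vertex set `{x_1, …, x_{3n-1}}`; the vertex `x_i` is
represented by the element of `Fin (3*n-1)` with value `i - 1`. -/
def Gn (n : ℕ) : SimpleGraph (Fin (3 * n - 1)) :=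
  SimpleGraph.fromRel (fun a b => gnRel n (a.1 + 1) (b.1 + 1))

/-- The graph `H_n = G_n ∖ x_{3n-1}`, with vertex set `{x_1, …, x_{3n-2}}`;
the vertex `x_i` is represented by the element of `Fin (3*n-2)` with value
`i - 1`. -/
def Hn (n : ℕ) : SimpleGraph (Fin (3 * n - 2)) :=
  SimpleGraph.fromRel (fun a b => gnRel n (a.1 + 1) (b.1 + 1))

/-! A maximal independent set `S` of `G` either avoids `x`, and is then maximal in `G ∖ x`, or
contains `x`, and then `S ∖ {x}` is maximal in `G_x`. Well-coveredness of the two subgraphs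
gives `|S| = α(G ∖ x)` in the first case and `|S| = α(G_x) + 1` in the second, so every maximal
independent set of `G` has `α(G ∖ x)` elements. -/

namespace IsMaxIndepOn

variable {G : SimpleGraph V} {A B S : Set V}

theorem mono (hS : IsMaxIndepOn G B S) (hSA : S ⊆ A) (hAB : A ⊆ B) : IsMaxIndepOn G A S :=
  ⟨⟨hSA, hS.1.2⟩, fun T hT hST => hS.2 T ⟨hT.1.trans hAB, hT.2⟩ hST⟩

theorem induce_preimage (hS : IsMaxIndepOn G A S) :
    IsMaxIndepOn (G.induce A) Set.univ (Subtype.val ⁻¹' S) := by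
  refine ⟨⟨Set.subset_univ _, fun u hu w hw hadj => hS.1.2 u hu w hw hadj⟩, fun Q hQ hSQ => ?_⟩
  have hQ' : IsIndepOn G A (Subtype.val '' Q) :=
    ⟨Subtype.coe_image_subset A Q, by
      rintro _ ⟨u, hu, rfl⟩ _ ⟨w, hw, rfl⟩ hadj
      exact hQ.2 u hu w hw hadj⟩
  have hS_sub : S ⊆ Subtype.val '' Q := fun s hs => ⟨⟨s, hS.1.1 hs⟩, hSQ hs, rfl⟩
  rw [hS.2 _ hQ' hS_sub, Set.preimage_image_eq Q Subtype.val_injective]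

theorem sdiff_singleton {x : V} (hS : IsMaxIndepOn G Set.univ S) (hx : x ∈ S) :
    IsMaxIndepOn G (closedNbhd G x)ᶜ (S \ {x}) := by
  have hS_sub : S \ {x} ⊆ (closedNbhd G x)ᶜ := by
    rintro u ⟨huS, hux⟩ (rfl | hxu)
    · exact hux rfl
    · exact hS.1.2 x hx u huS hxu
  refine ⟨⟨hS_sub, fun u hu w hw => hS.1.2 u hu.1 w hw.1⟩, fun T hT hST => ?_⟩
  have hxT : x ∉ T := fun h => hT.1 h (Set.mem_insert x _)
  have hT_insert : IsIndep G (insert x T) := by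
    rintro u (rfl | hu) w (rfl | hw) hadj
    · exact G.irrefl hadj
    · exact hT.1 hw (Or.inr hadj)
    · exact hT.1 hu (Or.inr hadj.symm)
    · exact hT.2 u hu w hw hadj
  have hS_eq : S = insert x T :=
    hS.2 _ ⟨Set.subset_univ _, hT_insert⟩ (Set.sdiff_subset_iff.mp hST)
  rw [hS_eq, Set.insert_sdiff_of_mem T (Set.mem_singleton x), Set.sdiff_singleton_eq_self hxT]

end IsMaxIndepOn

section Finite

variable [Finite V] {G : SimpleGraph V} {S : Set V}

theorem bddAbove_ncard_isIndep (G : SimpleGraph V) :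
    BddAbove {n : ℕ | ∃ S : Set V, IsIndep G S ∧ S.ncard = n} :=
  ⟨Nat.card V, by rintro _ ⟨S, -, rfl⟩; exact Set.ncard_le_card S⟩

theorem IsIndep.ncard_le_indepNumG (hS : IsIndep G S) : S.ncard ≤ indepNumG G :=
  le_csSup (bddAbove_ncard_isIndep G) ⟨S, hS, rfl⟩

theorem exists_isMaxIndepOn_univ_ncard_eq_indepNumG (G : SimpleGraph V) :
    ∃ S : Set V, IsMaxIndepOn G Set.univ S ∧ S.ncard = indepNumG G := by
  have hne : {n : ℕ | ∃ S : Set V, IsIndep G S ∧ S.ncard = n}.Nonempty :=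
    ⟨0, ∅, fun _ hu => absurd hu (Set.notMem_empty _), Set.ncard_empty V⟩
  obtain ⟨S, hS, hS_card⟩ : ∃ S : Set V, IsIndep G S ∧ S.ncard = indepNumG G :=
    Nat.sSup_mem hne (bddAbove_ncard_isIndep G)
  refine ⟨S, ⟨⟨Set.subset_univ S, hS⟩, fun T hT hST => ?_⟩, hS_card⟩
  by_contra hST_ne
  have hlt := Set.ncard_lt_ncard (hST.ssubset_of_ne hST_ne)
  have hle := hT.2.ncard_le_indepNumG
  omega

theorem WellCovered.ncard_eq_indepNumG (hG : WellCovered G) (hS : IsMaxIndepOn G Set.univ S) :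
    S.ncard = indepNumG G := by
  obtain ⟨T, hT, hT_card⟩ := exists_isMaxIndepOn_univ_ncard_eq_indepNumG G
  exact (hG S T hS hT).trans hT_card

theorem WellCovered.ncard_eq_indepNumG_induce {A : Set V} (hG : WellCovered (G.induce A))
    (hS : IsMaxIndepOn G A S) : S.ncard = indepNumG (G.induce A) := by
  rw [← hG.ncard_eq_indepNumG hS.induce_preimage,
    Set.ncard_preimage_of_injective_subset_range Subtype.val_injective
      (by rw [Subtype.range_coe]; exact hS.1.1)]

theorem wellCovered_and_indepNumG_eq_of_forall_ncard_eq {n : ℕ}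
    (h : ∀ S : Set V, IsMaxIndepOn G Set.univ S → S.ncard = n) :
    WellCovered G ∧ indepNumG G = n := by
  obtain ⟨S, hS, hS_card⟩ := exists_isMaxIndepOn_univ_ncard_eq_indepNumG G
  exact ⟨fun S T hS hT => (h S hS).trans (h T hT).symm, hS_card ▸ h S hS⟩

end Finite

/-- If both `G_x = G∖N[x]` and `G∖x` are well-covered with
`α(G∖x) = α(G_x) + 1`, then `G` is well-covered with `α(G) = α(G∖x)`. -/
theorem stmt10 {V : Type*} [Fintype V] (G : SimpleGraph V) (x : V)
    (h1 : WellCovered (G.induce ((closedNbhd G x)ᶜ)))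
    (h2 : WellCovered (G.induce ({x}ᶜ : Set V)))
    (h3 : indepNumG (G.induce ({x}ᶜ : Set V)) =
      indepNumG (G.induce ((closedNbhd G x)ᶜ)) + 1) :
    WellCovered G ∧ indepNumG G = indepNumG (G.induce ({x}ᶜ : Set V)) := by
  refine wellCovered_and_indepNumG_eq_of_forall_ncard_eq fun S hS => ?_
  by_cases hx : x ∈ S
  · rw [← Set.ncard_sdiff_singleton_add_one hx,
      h1.ncard_eq_indepNumG_induce (hS.sdiff_singleton hx), h3]
  · exact h2.ncard_eq_indepNumG_induce
      (hS.mono (Set.subset_compl_singleton_iff.mpr hx) (Set.subset_univ _))
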